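/- arXiv:2111.11006 — 4 statements merged into one kernel-verified Lean document; each statement's English description precedes it below -/
import Mathlib

section
/- Let G₁ be a simple connected graph with n₁ vertices and m₁ edges, and G₂ a simple connected graph with n₂ vertices and m₂ edges. Then the forgotten topological index of the corona join product satisfies F(G₁ ⊕ G₂) = F(G₁) + n₁·F(G₂) + 3n₁n₂·M₁(G₁) + 3n₁²·M₁(G₂) + 6m₁n₁²n₂² + 6m₂n₁³ + n₁⁴n₂(n₂² + 1). -/
open Finset

/-- Corona join product `G₁ ⊕ G₂`: one copy of `G₁` together with one copy of `G₂` for each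
vertex of `G₁`, where every vertex of every copy of `G₂` is joined to every vertex of `G₁`. -/
def coronaJoin {V₁ V₂ : Type*} (G₁ : SimpleGraph V₁) (G₂ : SimpleGraph V₂) :
    SimpleGraph (V₁ ⊕ V₁ × V₂) where
  Adj x y :=
    match x, y with
    | Sum.inl u, Sum.inl v => G₁.Adj u v
    | Sum.inl _, Sum.inr _ => True
    | Sum.inr _, Sum.inl _ => True
    | Sum.inr (i, u), Sum.inr (j, v) => i = j ∧ G₂.Adj u v
  symm := by
    constructor
    rintro (u | ⟨i, u⟩) (v | ⟨j, v⟩) h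
    · exact h.symm
    · trivial
    · trivial
    · exact ⟨h.1.symm, h.2.symm⟩
  loopless := by
    constructor
    rintro (u | ⟨i, u⟩) h
    · exact G₁.loopless.irrefl u h
    · exact G₂.loopless.irrefl u h.2

instance coronaJoin.adjDecidable {V₁ V₂ : Type*} (G₁ : SimpleGraph V₁) (G₂ : SimpleGraph V₂)
    [DecidableEq V₁] [DecidableRel G₁.Adj] [DecidableRel G₂.Adj] :
    DecidableRel (coronaJoin G₁ G₂).Adj
  | Sum.inl u, Sum.inl v => inferInstanceAs (Decidable (G₁.Adj u v))
  | Sum.inl _, Sum.inr _ => inferInstanceAs (Decidable True)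
  | Sum.inr _, Sum.inl _ => inferInstanceAs (Decidable True)
  | Sum.inr (i, u), Sum.inr (j, v) => inferInstanceAs (Decidable (i = j ∧ G₂.Adj u v))

/-- First Zagreb index `M₁(G) = ∑ v, d(v)²`. -/
def firstZagreb {V : Type*} [Fintype V] (G : SimpleGraph V) [DecidableRel G.Adj] : ℤ :=
  ∑ v, (G.degree v : ℤ) ^ 2

/-- Forgotten topological index `F(G) = ∑ v, d(v)³`. -/
def forgottenIndex {V : Type*} [Fintype V] (G : SimpleGraph V) [DecidableRel G.Adj] : ℤ :=
  ∑ v, (G.degree v : ℤ) ^ 3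

/-- First hyper Zagreb index `HM₁(G) = ∑_{uv ∈ E(G)} (d(u) + d(v))²`. -/
def hyperZagreb {V : Type*} [Fintype V] [DecidableEq V] (G : SimpleGraph V)
    [DecidableRel G.Adj] : ℤ :=
  ∑ e ∈ G.edgeFinset,
    Sym2.lift ⟨fun u v => ((G.degree u : ℤ) + (G.degree v : ℤ)) ^ 2, fun _ _ => by ring⟩ e

/-- Reduced second Zagreb index `RM₂(G) = ∑_{uv ∈ E(G)} (d(u) - 1)(d(v) - 1)`. -/
def reducedSecondZagreb {V : Type*} [Fintype V] [DecidableEq V] (G : SimpleGraph V)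
    [DecidableRel G.Adj] : ℤ :=
  ∑ e ∈ G.edgeFinset,
    Sym2.lift ⟨fun u v => ((G.degree u : ℤ) - 1) * ((G.degree v : ℤ) - 1), fun _ _ => by ring⟩ e

/-!
In `G₁ ⊕ G₂` a vertex of `G₁` gains all `n₁ n₂` vertices of the copies of `G₂` as neighbours,
and a vertex of a copy of `G₂` gains the `n₁` vertices of `G₁`. So `F(G₁ ⊕ G₂)` is
`∑ (d + n₁ n₂)³` over `G₁` plus `n₁` times `∑ (d + n₁)³` over `G₂`; expanding the cubes and using
`∑ d = 2m` gives the formula.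
-/

namespace coronaJoin

variable {V₁ V₂ : Type*} (G₁ : SimpleGraph V₁) (G₂ : SimpleGraph V₂)

@[simp] lemma adj_inl_inl {u v : V₁} :
    (coronaJoin G₁ G₂).Adj (Sum.inl u) (Sum.inl v) ↔ G₁.Adj u v := Iff.rfl

@[simp] lemma adj_inl_inr {u : V₁} {p : V₁ × V₂} :
    (coronaJoin G₁ G₂).Adj (Sum.inl u) (Sum.inr p) := trivial

@[simp] lemma adj_inr_inl {p : V₁ × V₂} {u : V₁} :
    (coronaJoin G₁ G₂).Adj (Sum.inr p) (Sum.inl u) := trivial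

@[simp] lemma adj_inr_inr {i j : V₁} {u v : V₂} :
    (coronaJoin G₁ G₂).Adj (Sum.inr (i, u)) (Sum.inr (j, v)) ↔ i = j ∧ G₂.Adj u v := Iff.rfl

variable [Fintype V₁] [Fintype V₂] [DecidableEq V₁] [DecidableRel G₁.Adj] [DecidableRel G₂.Adj]

lemma degree_inl (u : V₁) :
    (coronaJoin G₁ G₂).degree (Sum.inl u)
      = G₁.degree u + Fintype.card V₁ * Fintype.card V₂ := by
  simp only [← SimpleGraph.card_neighborFinset_eq_degree, SimpleGraph.neighborFinset_eq_filter,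
    card_filter, Fintype.sum_sum_type]
  simp

lemma degree_inr (i : V₁) (u : V₂) :
    (coronaJoin G₁ G₂).degree (Sum.inr (i, u)) = G₂.degree u + Fintype.card V₁ := by
  simp only [← SimpleGraph.card_neighborFinset_eq_degree, SimpleGraph.neighborFinset_eq_filter,
    card_filter, Fintype.sum_sum_type, Fintype.sum_prod_type]
  simp [ite_and, add_comm]

end coronaJoin

lemma sum_degree_add_pow_three {V : Type*} [Fintype V] [DecidableEq V] (G : SimpleGraph V)
    [DecidableRel G.Adj] (c : ℤ) :
    ∑ v, ((G.degree v : ℤ) + c) ^ 3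
      = forgottenIndex G + 3 * c * firstZagreb G + 6 * c ^ 2 * #G.edgeFinset
        + Fintype.card V * c ^ 3 := by
  have hsum : ∑ v, (G.degree v : ℤ) = 2 * #G.edgeFinset := by
    exact_mod_cast G.sum_degrees_eq_twice_card_edges
  have hexpand (d : ℤ) : (d + c) ^ 3 = d ^ 3 + 3 * c * d ^ 2 + 3 * c ^ 2 * d + c ^ 3 := by ring
  simp only [hexpand, sum_add_distrib, ← mul_sum, sum_const, card_univ, nsmul_eq_mul, hsum,
    forgottenIndex, firstZagreb]
  ring

theorem forgottenIndex_coronaJoin_general {V₁ V₂ : Type*} [Fintype V₁] [Fintype V₂]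
    [DecidableEq V₁] [DecidableEq V₂] (G₁ : SimpleGraph V₁) (G₂ : SimpleGraph V₂)
    [DecidableRel G₁.Adj] [DecidableRel G₂.Adj]
    (n₁ n₂ m₁ m₂ : ℕ)
    (hn₁ : Fintype.card V₁ = n₁) (hn₂ : Fintype.card V₂ = n₂)
    (hm₁ : G₁.edgeFinset.card = m₁) (hm₂ : G₂.edgeFinset.card = m₂) :
    forgottenIndex (coronaJoin G₁ G₂)
      = forgottenIndex G₁ + n₁ * forgottenIndex G₂
        + 3 * n₁ * n₂ * firstZagreb G₁ + 3 * (n₁ : ℤ) ^ 2 * firstZagreb G₂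
        + 6 * m₁ * (n₁ : ℤ) ^ 2 * (n₂ : ℤ) ^ 2 + 6 * m₂ * (n₁ : ℤ) ^ 3
        + (n₁ : ℤ) ^ 4 * n₂ * ((n₂ : ℤ) ^ 2 + 1) := by
  subst hn₁ hn₂ hm₁ hm₂
  have hsplit : forgottenIndex (coronaJoin G₁ G₂)
      = ∑ u, ((G₁.degree u : ℤ) + Fintype.card V₁ * Fintype.card V₂) ^ 3
        + Fintype.card V₁ * ∑ u, ((G₂.degree u : ℤ) + Fintype.card V₁) ^ 3 := by
    simp only [forgottenIndex, Fintype.sum_sum_type, Fintype.sum_prod_type, coronaJoin.degree_inl,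
      coronaJoin.degree_inr, sum_const, card_univ, nsmul_eq_mul, Nat.cast_add, Nat.cast_mul]
  rw [hsplit, sum_degree_add_pow_three, sum_degree_add_pow_three]
  ring

theorem forgottenIndex_coronaJoin {V₁ V₂ : Type*} [Fintype V₁] [Fintype V₂]
    [DecidableEq V₁] [DecidableEq V₂] (G₁ : SimpleGraph V₁) (G₂ : SimpleGraph V₂)
    [DecidableRel G₁.Adj] [DecidableRel G₂.Adj]
    (hG₁ : G₁.Connected) (hG₂ : G₂.Connected)
    (n₁ n₂ m₁ m₂ : ℕ)
    (hn₁ : Fintype.card V₁ = n₁) (hn₂ : Fintype.card V₂ = n₂)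
    (hm₁ : G₁.edgeFinset.card = m₁) (hm₂ : G₂.edgeFinset.card = m₂) :
    forgottenIndex (coronaJoin G₁ G₂)
      = forgottenIndex G₁ + n₁ * forgottenIndex G₂
        + 3 * n₁ * n₂ * firstZagreb G₁ + 3 * (n₁ : ℤ) ^ 2 * firstZagreb G₂
        + 6 * m₁ * (n₁ : ℤ) ^ 2 * (n₂ : ℤ) ^ 2 + 6 * m₂ * (n₁ : ℤ) ^ 3
        + (n₁ : ℤ) ^ 4 * n₂ * ((n₂ : ℤ) ^ 2 + 1) :=
  forgottenIndex_coronaJoin_general G₁ G₂ n₁ n₂ m₁ m₂ hn₁ hn₂ hm₁ hm₂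
end

section
/- Let G₁ be a simple connected graph with n₁ vertices and m₁ edges, and G₂ a simple connected graph with n₂ vertices and m₂ edges. Then the forgotten topological index of the subdivision vertex join satisfies F(G₁ ∔ G₂) = F(G₁) + F(G₂) + 3m₁·M₁(G₂) + m₁(2 + n₂)³ + 6m₂m₁² + m₁³n₂. -/
open Finset

/-- The subdivision graph `S(G)`: one new vertex inserted on every edge of `G`. -/
def subdivisionGraph {V₁ : Type*} (G : SimpleGraph V₁) : SimpleGraph (V₁ ⊕ G.edgeSet) where
  Adj x y :=
    match x, y with
    | Sum.inl u, Sum.inr e => u ∈ (e : Sym2 V₁)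
    | Sum.inr e, Sum.inl u => u ∈ (e : Sym2 V₁)
    | _, _ => False
  symm := by
    constructor
    rintro (u | e) (v | f) h
    · exact h.elim
    · exact h
    · exact h
    · exact h.elim
  loopless := by
    constructor
    rintro (u | e) h <;> exact h

instance subdivisionGraph.adjDecidable {V₁ : Type*} (G : SimpleGraph V₁) [DecidableEq V₁] :
    DecidableRel (subdivisionGraph G).Adj
  | Sum.inl u, Sum.inr e => inferInstanceAs (Decidable (u ∈ (e : Sym2 V₁)))
  | Sum.inr e, Sum.inl u => inferInstanceAs (Decidable (u ∈ (e : Sym2 V₁)))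
  | Sum.inl _, Sum.inl _ => inferInstanceAs (Decidable False)
  | Sum.inr _, Sum.inr _ => inferInstanceAs (Decidable False)

/-- The subdivision vertex join `G₁ ∔ G₂`: the disjoint union of `S(G₁)` and `G₂`,
with every subdivision (new) vertex of `S(G₁)` joined to every vertex of `G₂`. -/
def subdivisionVertexJoin {V₁ V₂ : Type*} (G₁ : SimpleGraph V₁) (G₂ : SimpleGraph V₂) :
    SimpleGraph (V₁ ⊕ G₁.edgeSet ⊕ V₂) where
  Adj x y :=
    match x, y with
    | Sum.inl u, Sum.inr (Sum.inl e) => u ∈ (e : Sym2 V₁)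
    | Sum.inr (Sum.inl e), Sum.inl u => u ∈ (e : Sym2 V₁)
    | Sum.inr (Sum.inl _), Sum.inr (Sum.inr _) => True
    | Sum.inr (Sum.inr _), Sum.inr (Sum.inl _) => True
    | Sum.inr (Sum.inr u), Sum.inr (Sum.inr v) => G₂.Adj u v
    | _, _ => False
  symm := by
    constructor
    rintro (u | e | u) (v | f | v) h <;> first | exact h.elim | exact h | trivial | exact h.symm
  loopless := by
    constructor
    rintro (u | e | u) h
    · exact h
    · exact h
    · exact G₂.loopless.irrefl u h

instance subdivisionVertexJoin.adjDecidable {V₁ V₂ : Type*} (G₁ : SimpleGraph V₁)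
    (G₂ : SimpleGraph V₂) [DecidableEq V₁] [DecidableRel G₂.Adj] :
    DecidableRel (subdivisionVertexJoin G₁ G₂).Adj
  | Sum.inl u, Sum.inr (Sum.inl e) => inferInstanceAs (Decidable (u ∈ (e : Sym2 V₁)))
  | Sum.inr (Sum.inl e), Sum.inl u => inferInstanceAs (Decidable (u ∈ (e : Sym2 V₁)))
  | Sum.inr (Sum.inl _), Sum.inr (Sum.inr _) => inferInstanceAs (Decidable True)
  | Sum.inr (Sum.inr _), Sum.inr (Sum.inl _) => inferInstanceAs (Decidable True)
  | Sum.inr (Sum.inr u), Sum.inr (Sum.inr v) => inferInstanceAs (Decidable (G₂.Adj u v))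
  | Sum.inl _, Sum.inl _ => inferInstanceAs (Decidable False)
  | Sum.inl _, Sum.inr (Sum.inr _) => inferInstanceAs (Decidable False)
  | Sum.inr (Sum.inr _), Sum.inl _ => inferInstanceAs (Decidable False)
  | Sum.inr (Sum.inl _), Sum.inr (Sum.inl _) => inferInstanceAs (Decidable False)

/-!
In `G₁ ∔ G₂` a vertex of `G₁` keeps its degree, a subdivision vertex has degree `2 + n₂`
(its two endpoints and all of `G₂`), and a vertex of `G₂` gains `m₁`. Summing cubes, the
`G₂`-part `∑ (d + m₁)³` expands binomially, and the handshake lemma `∑ d = 2 m₂` turns its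
linear term into `6 m₂ m₁²`.
-/

lemma Finset.card_filter_univ_sum {α β : Type*} [Fintype α] [Fintype β] (p : α ⊕ β → Prop)
    [DecidablePred p] : #{x | p x} = #{a | p (.inl a)} + #{b | p (.inr b)} := by
  simp only [card_filter, Fintype.sum_sum_type]

namespace SimpleGraph

variable {V : Type*} [Fintype V] (G : SimpleGraph V)

lemma card_filter_mem_edgeSet_eq_degree [DecidableEq V] [DecidableRel G.Adj] (v : V) :
    #{e : G.edgeSet | v ∈ (e : Sym2 V)} = G.degree v := by
  rw [← card_incidenceSet_eq_degree, ← Fintype.card_subtype]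
  exact Fintype.card_congr (Equiv.subtypeSubtypeEquivSubtypeInter (· ∈ G.edgeSet) (v ∈ ·))

lemma card_filter_mem_edge_eq_two [DecidableEq V] (e : G.edgeSet) :
    #{v | v ∈ (e : Sym2 V)} = 2 := by
  rw [← Sym2.card_toFinset_of_not_isDiag _ (G.not_isDiag_of_mem_edgeSet e.2)]
  congr 1
  ext
  simp

lemma sum_degree_add_pow_three [DecidableEq V] [DecidableRel G.Adj] (c : ℤ) :
    ∑ v, ((G.degree v : ℤ) + c) ^ 3
      = forgottenIndex G + 3 * c * firstZagreb G + 6 * c ^ 2 * #G.edgeFinset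
        + c ^ 3 * Fintype.card V := by
  have handshake : ∑ v, (G.degree v : ℤ) = 2 * #G.edgeFinset := by
    exact_mod_cast G.sum_degrees_eq_twice_card_edges
  have expand (v : V) : ((G.degree v : ℤ) + c) ^ 3 = (G.degree v : ℤ) ^ 3
      + 3 * c * (G.degree v : ℤ) ^ 2 + 3 * c ^ 2 * G.degree v + c ^ 3 := by ring
  simp only [forgottenIndex, firstZagreb, expand, sum_add_distrib, ← mul_sum, handshake,
    sum_const, card_univ, nsmul_eq_mul]
  ring

end SimpleGraph

namespace subdivisionVertexJoin

open SimpleGraph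

section Adj

/- Unfolding the `match` in `subdivisionVertexJoin` under a `Finset.filter` leaves the filter's
decidability instance ill-typed; rewriting with these lemmas lets `simp` re-synthesize it. -/

variable {V₁ V₂ : Type*} {G₁ : SimpleGraph V₁} {G₂ : SimpleGraph V₂}
  {u u' : V₁} {e e' : G₁.edgeSet} {v v' : V₂}

@[simp] lemma adj_inl_inl : (subdivisionVertexJoin G₁ G₂).Adj (.inl u) (.inl u') ↔ False := Iff.rfl

@[simp] lemma adj_inl_edge :
    (subdivisionVertexJoin G₁ G₂).Adj (.inl u) (.inr (.inl e)) ↔ u ∈ (e : Sym2 V₁) := Iff.rfl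

@[simp] lemma adj_inl_inr : (subdivisionVertexJoin G₁ G₂).Adj (.inl u) (.inr (.inr v)) ↔ False :=
  Iff.rfl

@[simp] lemma adj_edge_inl :
    (subdivisionVertexJoin G₁ G₂).Adj (.inr (.inl e)) (.inl u) ↔ u ∈ (e : Sym2 V₁) := Iff.rfl

@[simp] lemma adj_edge_edge :
    (subdivisionVertexJoin G₁ G₂).Adj (.inr (.inl e)) (.inr (.inl e')) ↔ False := Iff.rfl

@[simp] lemma adj_edge_inr :
    (subdivisionVertexJoin G₁ G₂).Adj (.inr (.inl e)) (.inr (.inr v)) ↔ True := Iff.rfl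

@[simp] lemma adj_inr_inl : (subdivisionVertexJoin G₁ G₂).Adj (.inr (.inr v)) (.inl u) ↔ False :=
  Iff.rfl

@[simp] lemma adj_inr_edge :
    (subdivisionVertexJoin G₁ G₂).Adj (.inr (.inr v)) (.inr (.inl e)) ↔ True := Iff.rfl

@[simp] lemma adj_inr_inr :
    (subdivisionVertexJoin G₁ G₂).Adj (.inr (.inr v)) (.inr (.inr v')) ↔ G₂.Adj v v' := Iff.rfl

end Adj

variable {V₁ V₂ : Type*} [Fintype V₁] [Fintype V₂] [DecidableEq V₁]
  (G₁ : SimpleGraph V₁) (G₂ : SimpleGraph V₂) [DecidableRel G₁.Adj] [DecidableRel G₂.Adj]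

lemma degree_eq_card_filter_add (x : V₁ ⊕ G₁.edgeSet ⊕ V₂) :
    (subdivisionVertexJoin G₁ G₂).degree x
      = #{u | (subdivisionVertexJoin G₁ G₂).Adj x (.inl u)}
        + #{e | (subdivisionVertexJoin G₁ G₂).Adj x (.inr (.inl e))}
        + #{v | (subdivisionVertexJoin G₁ G₂).Adj x (.inr (.inr v))} := by
  rw [← card_neighborFinset_eq_degree, neighborFinset_eq_filter, card_filter_univ_sum,
    card_filter_univ_sum, add_assoc]

lemma degree_inl (u : V₁) : (subdivisionVertexJoin G₁ G₂).degree (.inl u) = G₁.degree u := by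
  simp [degree_eq_card_filter_add, card_filter_mem_edgeSet_eq_degree]

lemma degree_edge (e : G₁.edgeSet) :
    (subdivisionVertexJoin G₁ G₂).degree (.inr (.inl e)) = 2 + Fintype.card V₂ := by
  simp [degree_eq_card_filter_add, card_filter_mem_edge_eq_two]

lemma degree_inr (v : V₂) :
    (subdivisionVertexJoin G₁ G₂).degree (.inr (.inr v))
      = G₂.degree v + Fintype.card G₁.edgeSet := by
  simp [degree_eq_card_filter_add, ← neighborFinset_eq_filter, add_comm]

lemma forgottenIndex_eq :
    forgottenIndex (subdivisionVertexJoin G₁ G₂)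
      = forgottenIndex G₁ + Fintype.card G₁.edgeSet * (2 + (Fintype.card V₂ : ℤ)) ^ 3
        + ∑ v, ((G₂.degree v : ℤ) + Fintype.card G₁.edgeSet) ^ 3 := by
  simp only [forgottenIndex, Fintype.sum_sum_type, degree_inl, degree_edge, degree_inr,
    sum_const, card_univ, nsmul_eq_mul]
  push_cast
  ring

end subdivisionVertexJoin

theorem forgottenIndex_subdivisionVertexJoin_general {V₁ V₂ : Type*} [Fintype V₁] [Fintype V₂]
    [DecidableEq V₁] [DecidableEq V₂] (G₁ : SimpleGraph V₁) (G₂ : SimpleGraph V₂)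
    [DecidableRel G₁.Adj] [DecidableRel G₂.Adj]
    (n₂ m₁ m₂ : ℕ)
    (hn₂ : Fintype.card V₂ = n₂)
    (hm₁ : G₁.edgeFinset.card = m₁) (hm₂ : G₂.edgeFinset.card = m₂) :
    forgottenIndex (subdivisionVertexJoin G₁ G₂)
      = forgottenIndex G₁ + forgottenIndex G₂ + 3 * m₁ * firstZagreb G₂
        + m₁ * (2 + (n₂ : ℤ)) ^ 3 + 6 * m₂ * (m₁ : ℤ) ^ 2 + (m₁ : ℤ) ^ 3 * n₂ := by
  rw [SimpleGraph.edgeFinset_card] at hm₁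
  rw [subdivisionVertexJoin.forgottenIndex_eq, SimpleGraph.sum_degree_add_pow_three, hm₁, hm₂,
    hn₂]
  ring

theorem forgottenIndex_subdivisionVertexJoin {V₁ V₂ : Type*} [Fintype V₁] [Fintype V₂]
    [DecidableEq V₁] [DecidableEq V₂] (G₁ : SimpleGraph V₁) (G₂ : SimpleGraph V₂)
    [DecidableRel G₁.Adj] [DecidableRel G₂.Adj]
    (hG₁ : G₁.Connected) (hG₂ : G₂.Connected)
    (n₁ n₂ m₁ m₂ : ℕ)
    (hn₁ : Fintype.card V₁ = n₁) (hn₂ : Fintype.card V₂ = n₂)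
    (hm₁ : G₁.edgeFinset.card = m₁) (hm₂ : G₂.edgeFinset.card = m₂) :
    forgottenIndex (subdivisionVertexJoin G₁ G₂)
      = forgottenIndex G₁ + forgottenIndex G₂ + 3 * m₁ * firstZagreb G₂
        + m₁ * (2 + (n₂ : ℤ)) ^ 3 + 6 * m₂ * (m₁ : ℤ) ^ 2 + (m₁ : ℤ) ^ 3 * n₂ :=
  forgottenIndex_subdivisionVertexJoin_general G₁ G₂ n₂ m₁ m₂ hn₂ hm₁ hm₂
end

section
/- Let G₁ be a simple connected graph with n₁ vertices and m₁ edges, and G₂ a simple connected graph with n₂ vertices and m₂ edges. Then the first hyper Zagreb index of the corona join product satisfies HM₁(G₁ ⊕ G₂) = HM₁(G₁) + n₁·HM₁(G₂) + 5n₁[n₂·M₁(G₁) + n₁·M₁(G₂)] + 4n₁[m₁n₁n₂² + m₂n₁² + 2m₁m₂] + n₁²(n₂ + 1)[4m₁n₂ + 4m₂n₁ + n₁²n₂(n₂ + 1)]. -/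
open Finset

/-!
Summing over ordered pairs of adjacent vertices counts every edge twice, so `2 HM₁(G)` is the sum
of `(d(x) + d(y))²` over adjacent pairs. In `G₁ ⊕ G₂` a vertex `u` of `G₁` has degree
`d₁(u) + n₁n₂` and a vertex `v` of a copy of `G₂` has degree `d₂(v) + n₁`. The adjacent pairs
lie inside `G₁`, inside one copy of `G₂`, or between `G₁` and a copy of `G₂`: the first two blocks
are hyper Zagreb sums with uniformly shifted degrees, the last is a sum over all of
`V₁ × V₂`, and each expands into `HM₁`, `M₁`, vertex and edge counts.
-/

open SimpleGraph

namespace SimpleGraph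

variable {V : Type*} [Fintype V] (G : SimpleGraph V) [DecidableRel G.Adj]
  {M : Type*} [AddCommMonoid M]

theorem sum_darts_edge_eq_two_nsmul [DecidableEq V] (g : Sym2 V → M) :
    ∑ d : G.Dart, g d.edge = 2 • ∑ e ∈ G.edgeFinset, g e := by
  rw [← sum_fiberwise_of_maps_to (fun d _ => mem_edgeFinset.2 d.edge_mem), smul_sum]
  refine sum_congr rfl fun e he => ?_
  rw [sum_congr rfl fun d hd => congrArg g (mem_filter.1 hd).2, sum_const,
    G.dart_edge_fiber_card e (mem_edgeFinset.1 he)]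

theorem sum_sum_ite_adj_eq_sum_darts (f : V → V → M) :
    ∑ u, ∑ v, (if G.Adj u v then f u v else 0) = ∑ d : G.Dart, f d.fst d.snd := by
  rw [← Fintype.sum_prod_type', ← sum_filter]
  exact sum_bij' (fun p hp => ⟨p, (mem_filter.1 hp).2⟩) (fun d _ => d.toProd)
    (fun _ _ => mem_univ _) (fun d _ => by simp [d.adj]) (fun _ _ => rfl) (fun _ _ => rfl)
    (fun _ _ => rfl)

theorem sum_sum_ite_adj_eq_two_nsmul [DecidableEq V] (f : V → V → M)
    (hf : ∀ u v, f u v = f v u) :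
    ∑ u, ∑ v, (if G.Adj u v then f u v else 0) = 2 • ∑ e ∈ G.edgeFinset, Sym2.lift ⟨f, hf⟩ e := by
  rw [sum_sum_ite_adj_eq_sum_darts, ← sum_darts_edge_eq_two_nsmul]
  rfl

theorem sum_sum_ite_adj_left (g : V → M) :
    ∑ u, ∑ v, (if G.Adj u v then g u else 0) = ∑ u, G.degree u • g u := by
  simp only [← sum_filter, sum_const, ← neighborFinset_eq_filter, card_neighborFinset_eq_degree]

theorem sum_sum_ite_adj_right (g : V → M) :
    ∑ u, ∑ v, (if G.Adj u v then g v else 0) = ∑ u, G.degree u • g u := by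
  rw [sum_comm, ← sum_sum_ite_adj_left]
  simp only [G.adj_comm]

end SimpleGraph

section Zagreb

variable {V : Type*} [Fintype V] (G : SimpleGraph V) [DecidableRel G.Adj]

theorem sum_degree_eq_two_mul_card_edgeFinset [DecidableEq V] :
    ∑ v, (G.degree v : ℤ) = 2 * #G.edgeFinset := by
  exact_mod_cast G.sum_degrees_eq_twice_card_edges

theorem two_mul_hyperZagreb [DecidableEq V] :
    2 * hyperZagreb G
      = ∑ u, ∑ v, if G.Adj u v then ((G.degree u : ℤ) + G.degree v) ^ 2 else 0 := by
  rw [G.sum_sum_ite_adj_eq_two_nsmul _ fun u v => by ring, two_nsmul, two_mul]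
  rfl

theorem sum_sum_ite_adj_degree_add_sq [DecidableEq V] (a : ℤ) :
    ∑ u, ∑ v, (if G.Adj u v then (((G.degree u : ℤ) + a) + ((G.degree v : ℤ) + a)) ^ 2 else 0)
      = 2 * hyperZagreb G + 8 * a * firstZagreb G + 8 * a ^ 2 * #G.edgeFinset := by
  have expand : ∀ u v : V, (((G.degree u : ℤ) + a) + ((G.degree v : ℤ) + a)) ^ 2
      = ((G.degree u : ℤ) + G.degree v) ^ 2 + 4 * a * G.degree u + 4 * a * G.degree v
        + 4 * a ^ 2 := fun u v => by ring
  simp only [expand, ite_add_zero, sum_add_distrib, G.sum_sum_ite_adj_left,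
    G.sum_sum_ite_adj_right, ← two_mul_hyperZagreb, nsmul_eq_mul, mul_left_comm _ (4 * a),
    ← mul_sum, ← sum_mul, ← sq, sum_degree_eq_two_mul_card_edgeFinset]
  rw [firstZagreb]
  ring

theorem sum_degree_add_sq [DecidableEq V] (a : ℤ) :
    ∑ v, ((G.degree v : ℤ) + a) ^ 2
      = firstZagreb G + 4 * a * #G.edgeFinset + Fintype.card V * a ^ 2 := by
  simp only [add_sq, sum_add_distrib, ← sum_mul, ← mul_sum, sum_degree_eq_two_mul_card_edgeFinset,
    sum_const, card_univ, nsmul_eq_mul, firstZagreb]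
  ring

theorem sum_degree_add [DecidableEq V] (a : ℤ) :
    ∑ v, ((G.degree v : ℤ) + a) = 2 * #G.edgeFinset + Fintype.card V * a := by
  simp only [sum_add_distrib, sum_degree_eq_two_mul_card_edgeFinset, sum_const, card_univ,
    nsmul_eq_mul]

end Zagreb

theorem Finset.sum_sum_add_sq {R α β : Type*} [CommSemiring R] (s : Finset α) (t : Finset β)
    (f : α → R) (g : β → R) :
    ∑ x ∈ s, ∑ y ∈ t, (f x + g y) ^ 2
      = #t * ∑ x ∈ s, f x ^ 2 + #s * ∑ y ∈ t, g y ^ 2 + 2 * (∑ x ∈ s, f x) * ∑ y ∈ t, g y := by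
  have expand : ∀ x y, (f x + g y) ^ 2 = f x ^ 2 + g y ^ 2 + 2 * f x * g y := fun x y => by ring
  simp only [expand, sum_add_distrib, sum_const, nsmul_eq_mul, ← mul_sum, ← sum_mul]

section CoronaJoin

variable {V₁ V₂ : Type*} (G₁ : SimpleGraph V₁) (G₂ : SimpleGraph V₂)

@[simp]
theorem coronaJoin_adj_inl_inl {u v : V₁} :
    (coronaJoin G₁ G₂).Adj (.inl u) (.inl v) ↔ G₁.Adj u v := Iff.rfl

@[simp]
theorem coronaJoin_adj_inl_inr (u : V₁) (p : V₁ × V₂) :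
    (coronaJoin G₁ G₂).Adj (.inl u) (.inr p) := trivial

@[simp]
theorem coronaJoin_adj_inr_inl (p : V₁ × V₂) (u : V₁) :
    (coronaJoin G₁ G₂).Adj (.inr p) (.inl u) := trivial

@[simp]
theorem coronaJoin_adj_inr_inr {i j : V₁} {u v : V₂} :
    (coronaJoin G₁ G₂).Adj (.inr (i, u)) (.inr (j, v)) ↔ i = j ∧ G₂.Adj u v := Iff.rfl

variable [Fintype V₁] [Fintype V₂] [DecidableEq V₁] [DecidableRel G₁.Adj] [DecidableRel G₂.Adj]

theorem coronaJoin_degree_inl (u : V₁) :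
    ((coronaJoin G₁ G₂).degree (.inl u) : ℤ)
      = G₁.degree u + Fintype.card V₁ * Fintype.card V₂ := by
  have h : (coronaJoin G₁ G₂).neighborFinset (.inl u)
      = (G₁.neighborFinset u).disjSum (univ : Finset (V₁ × V₂)) := by
    ext (v | p) <;> simp
  rw [← card_neighborFinset_eq_degree, h, card_disjSum, card_univ, Fintype.card_prod,
    card_neighborFinset_eq_degree]
  push_cast; rfl

theorem coronaJoin_degree_inr (i : V₁) (u : V₂) :
    ((coronaJoin G₁ G₂).degree (.inr (i, u)) : ℤ) = G₂.degree u + Fintype.card V₁ := by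
  have h : (coronaJoin G₁ G₂).neighborFinset (.inr (i, u))
      = (univ : Finset V₁).disjSum ({i} ×ˢ G₂.neighborFinset u) := by
    ext (v | ⟨j, v⟩) <;> simp [and_comm]
  rw [← card_neighborFinset_eq_degree, h, card_disjSum, card_univ, card_product, card_singleton,
    one_mul, card_neighborFinset_eq_degree]
  push_cast; ring

theorem sum_sum_ite_coronaJoin_adj {M : Type*} [AddCommMonoid M]
    (f : V₁ ⊕ V₁ × V₂ → V₁ ⊕ V₁ × V₂ → M) :
    ∑ x, ∑ y, (if (coronaJoin G₁ G₂).Adj x y then f x y else 0)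
      = ∑ u, ∑ v, (if G₁.Adj u v then f (.inl u) (.inl v) else 0)
        + ∑ u, ∑ p, f (.inl u) (.inr p) + ∑ p, ∑ u, f (.inr p) (.inl u)
        + ∑ i, ∑ u, ∑ v, (if G₂.Adj u v then f (.inr (i, u)) (.inr (i, v)) else 0) := by
  have copies : ∑ p, ∑ q,
      (if (coronaJoin G₁ G₂).Adj (.inr p) (.inr q) then f (.inr p) (.inr q) else 0)
        = ∑ i, ∑ u, ∑ v, (if G₂.Adj u v then f (.inr (i, u)) (.inr (i, v)) else 0) := by
    simp only [Fintype.sum_prod_type, coronaJoin_adj_inr_inr, ite_and, sum_ite_irrel,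
      sum_const_zero, sum_ite_eq, mem_univ, if_true]
  simp only [Fintype.sum_sum_type, sum_add_distrib, coronaJoin_adj_inl_inl,
    coronaJoin_adj_inl_inr, coronaJoin_adj_inr_inl, if_true, copies]
  abel

end CoronaJoin

theorem hyperZagreb_coronaJoin_general {V₁ V₂ : Type*} [Fintype V₁] [Fintype V₂]
    [DecidableEq V₁] [DecidableEq V₂] (G₁ : SimpleGraph V₁) (G₂ : SimpleGraph V₂)
    [DecidableRel G₁.Adj] [DecidableRel G₂.Adj]
    (n₁ n₂ m₁ m₂ : ℕ)
    (hn₁ : Fintype.card V₁ = n₁) (hn₂ : Fintype.card V₂ = n₂)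
    (hm₁ : G₁.edgeFinset.card = m₁) (hm₂ : G₂.edgeFinset.card = m₂) :
    hyperZagreb (coronaJoin G₁ G₂)
      = hyperZagreb G₁ + n₁ * hyperZagreb G₂
        + 5 * n₁ * (n₂ * firstZagreb G₁ + n₁ * firstZagreb G₂)
        + 4 * n₁ * (m₁ * n₁ * (n₂ : ℤ) ^ 2 + m₂ * (n₁ : ℤ) ^ 2 + 2 * m₁ * m₂)
        + (n₁ : ℤ) ^ 2 * ((n₂ : ℤ) + 1)
          * (4 * m₁ * n₂ + 4 * m₂ * n₁ + (n₁ : ℤ) ^ 2 * n₂ * ((n₂ : ℤ) + 1)) := by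
  subst hn₁ hn₂ hm₁ hm₂
  apply mul_left_cancel₀ (two_ne_zero (α := ℤ))
  simp only [two_mul_hyperZagreb (coronaJoin G₁ G₂), sum_sum_ite_coronaJoin_adj,
    Fintype.sum_prod_type, coronaJoin_degree_inl, coronaJoin_degree_inr, sum_const, card_univ,
    nsmul_eq_mul, ← mul_sum]
  rw [sum_sum_ite_adj_degree_add_sq, sum_sum_ite_adj_degree_add_sq, sum_sum_add_sq, sum_sum_add_sq]
  simp only [card_univ, sum_degree_add_sq, sum_degree_add]
  ring

theorem hyperZagreb_coronaJoin {V₁ V₂ : Type*} [Fintype V₁] [Fintype V₂]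
    [DecidableEq V₁] [DecidableEq V₂] (G₁ : SimpleGraph V₁) (G₂ : SimpleGraph V₂)
    [DecidableRel G₁.Adj] [DecidableRel G₂.Adj]
    (hG₁ : G₁.Connected) (hG₂ : G₂.Connected)
    (n₁ n₂ m₁ m₂ : ℕ)
    (hn₁ : Fintype.card V₁ = n₁) (hn₂ : Fintype.card V₂ = n₂)
    (hm₁ : G₁.edgeFinset.card = m₁) (hm₂ : G₂.edgeFinset.card = m₂) :
    hyperZagreb (coronaJoin G₁ G₂)
      = hyperZagreb G₁ + n₁ * hyperZagreb G₂
        + 5 * n₁ * (n₂ * firstZagreb G₁ + n₁ * firstZagreb G₂)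
        + 4 * n₁ * (m₁ * n₁ * (n₂ : ℤ) ^ 2 + m₂ * (n₁ : ℤ) ^ 2 + 2 * m₁ * m₂)
        + (n₁ : ℤ) ^ 2 * ((n₂ : ℤ) + 1)
          * (4 * m₁ * n₂ + 4 * m₂ * n₁ + (n₁ : ℤ) ^ 2 * n₂ * ((n₂ : ℤ) + 1)) :=
  hyperZagreb_coronaJoin_general G₁ G₂ n₁ n₂ m₁ m₂ hn₁ hn₂ hm₁ hm₂
end

section
/- Let G₁ be a simple connected graph with n₁ vertices and m₁ edges, let S(G₁) be its subdivision graph with m₁' = 2m₁ edges, and let G₂ be a simple connected graph with n₂ vertices and m₂ edges. Then the reduced second Zagreb index of the subdivision vertex join satisfies RM₂(G₁ ∔ G₂) = RM₂(G₂) + m₁[M₁(G₂) + m₁m₂ − 2m₂] − m₁'(n₂ + 1) + m₁(n₂ + 1)[2m₂ + m₁n₂ − n₂] + (n₂ + 1)·Σ_{uv∈E(S(G₁))} d_{G₁}(u), where in the last sum each edge of S(G₁) joins an original vertex u ∈ V(G₁) to a subdivision vertex, and d_{G₁}(u) is the degree of that original endpoint u in G₁. -/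
open Finset

/-!
The edges of `G₁ ∔ G₂` fall into three classes: the `2m₁` edges of `S(G₁)`, the `m₁n₂` edges
joining a subdivision vertex to a vertex of `G₂`, and the edges of `G₂`. In the join an original
vertex `u` keeps its degree `d_{G₁}(u)`, a subdivision vertex has degree `n₂ + 2`, and a vertex `v`
of `G₂` has degree `m₁ + d_{G₂}(v)`, so summing `(d(x) - 1)(d(y) - 1)` over each class gives one
group of terms of the formula. The splitting of the edge sum into the three classes is proved
after doubling, where each edge sum becomes a sum over ordered pairs of adjacent vertices that
splits into blocks along `V₁ ⊕ E(G₁) ⊕ V₂`.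
-/

theorem Sym2.sum_ite_mem_mk {α M : Type*} [Fintype α] [DecidableEq α] [AddCommMonoid M]
    {x y : α} (hxy : x ≠ y) (f : α → M) :
    ∑ a, (if a ∈ s(x, y) then f a else 0) = f x + f y := by
  rw [← Finset.sum_filter, show univ.filter (· ∈ s(x, y)) = {x, y} by ext; simp,
    Finset.sum_pair hxy]

namespace SimpleGraph

variable {V M : Type*} [Fintype V] (G : SimpleGraph V) [DecidableRel G.Adj] [AddCommMonoid M]

theorem sum_dart_eq_sum_sum_ite_adj (f : V → V → M) :
    ∑ d : G.Dart, f d.fst d.snd = ∑ x, ∑ y, if G.Adj x y then f x y else 0 := by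
  simp_rw [← Fintype.sum_prod_type', ← Finset.sum_filter]
  refine Finset.sum_nbij Dart.toProd (by simp [Dart.adj]) Dart.toProd_injective.injOn
    (fun p hp => ⟨⟨p, (Finset.mem_filter.1 hp).2⟩, by simp⟩) fun _ _ => rfl

variable [DecidableEq V]

theorem two_nsmul_sum_edgeFinset_lift (f : V → V → M) (hf : ∀ x y, f x y = f y x) :
    2 • ∑ e ∈ G.edgeFinset, Sym2.lift ⟨f, hf⟩ e
      = ∑ x, ∑ y, if G.Adj x y then f x y else 0 := by
  rw [← sum_dart_eq_sum_sum_ite_adj, ← Finset.sum_fiberwise_of_maps_to (g := Dart.edge)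
    (t := G.edgeFinset) (by simp [Dart.edge_mem]), Finset.smul_sum]
  refine Finset.sum_congr rfl fun e he => ?_
  rw [Finset.sum_congr rfl fun d hd =>
    show f d.fst d.snd = Sym2.lift ⟨f, hf⟩ e by rw [← (Finset.mem_filter.1 hd).2]; rfl,
    Finset.sum_const, G.dart_edge_fiber_card e (mem_edgeFinset.1 he)]

theorem sum_edgeFinset_ite_mem (v : V) (c : M) :
    ∑ e ∈ G.edgeFinset, (if v ∈ e then c else 0) = G.degree v • c := by
  rw [← Finset.sum_filter, ← incidenceFinset_eq_filter, Finset.sum_const,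
    card_incidenceFinset_eq_degree]

theorem sum_edgeFinset_lift_add (h : V → M) :
    ∑ e ∈ G.edgeFinset, Sym2.lift ⟨fun x y => h x + h y, fun _ _ => add_comm _ _⟩ e
      = ∑ v, G.degree v • h v := by
  have hedge : ∀ e ∈ G.edgeFinset, Sym2.lift ⟨fun x y => h x + h y, fun _ _ => add_comm _ _⟩ e
      = ∑ v, if v ∈ e then h v else 0 := by
    rintro ⟨x, y⟩ he
    exact (Sym2.sum_ite_mem_mk (G.ne_of_adj (mem_edgeFinset.1 he)) h).symm
  rw [Finset.sum_congr rfl hedge, Finset.sum_comm]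
  exact Finset.sum_congr rfl fun v _ => G.sum_edgeFinset_ite_mem v (h v)

theorem sum_edgeFinset_degree_add_degree :
    ∑ e ∈ G.edgeFinset,
      Sym2.lift ⟨fun x y => (G.degree x : ℤ) + G.degree y, fun _ _ => add_comm _ _⟩ e
      = firstZagreb G := by
  rw [sum_edgeFinset_lift_add, firstZagreb]
  simp [sq]

theorem sum_edgeFinset_add_degree_sub_one_mul (k : ℕ) :
    ∑ z ∈ G.edgeFinset, Sym2.lift ⟨fun x y => (((k + G.degree x : ℕ) : ℤ) - 1) *
        (((k + G.degree y : ℕ) : ℤ) - 1), fun _ _ => mul_comm _ _⟩ z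
      = reducedSecondZagreb G + k * (firstZagreb G + k * #G.edgeFinset - 2 * #G.edgeFinset) := by
  have hedge : ∀ z ∈ G.edgeFinset, Sym2.lift ⟨fun x y => (((k + G.degree x : ℕ) : ℤ) - 1) *
        (((k + G.degree y : ℕ) : ℤ) - 1), fun _ _ => mul_comm _ _⟩ z
      = Sym2.lift ⟨fun x y => ((G.degree x : ℤ) - 1) * ((G.degree y : ℤ) - 1),
          fun _ _ => mul_comm _ _⟩ z
        + k * Sym2.lift ⟨fun x y => (G.degree x : ℤ) + G.degree y, fun _ _ => add_comm _ _⟩ z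
        + (k * k - 2 * k) := by
    rintro ⟨x, y⟩ -
    simp only [Sym2.lift_mk]
    push_cast
    ring
  rw [Finset.sum_congr rfl hedge, Finset.sum_add_distrib, Finset.sum_add_distrib, ← Finset.mul_sum,
    sum_edgeFinset_degree_add_degree, Finset.sum_const, nsmul_eq_mul, reducedSecondZagreb]
  ring

end SimpleGraph

theorem exists_eq_of_mem_edgeSet_subdivisionGraph {V : Type*} {G : SimpleGraph V}
    {z : Sym2 (V ⊕ G.edgeSet)} (hz : z ∈ (subdivisionGraph G).edgeSet) :
    ∃ (u : V) (e : G.edgeSet), u ∈ (e : Sym2 V) ∧ z = s(Sum.inl u, Sum.inr e) := by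
  induction z using Sym2.ind with
  | h x y =>
    rcases x with u | e <;> rcases y with v | f
    · exact hz.elim
    · exact ⟨u, f, hz, rfl⟩
    · exact ⟨v, e, hz, Sym2.eq_swap⟩
    · exact hz.elim

section SubdivisionVertexJoin

open SimpleGraph

variable {V₁ V₂ : Type*} [Fintype V₁] [Fintype V₂] [DecidableEq V₁]
  (G₁ : SimpleGraph V₁) (G₂ : SimpleGraph V₂) [DecidableRel G₁.Adj] [DecidableRel G₂.Adj]

theorem degree_subdivisionVertexJoin_inl (u : V₁) :
    (subdivisionVertexJoin G₁ G₂).degree (Sum.inl u) = G₁.degree u := by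
  rw [← card_neighborFinset_eq_degree, neighborFinset_eq_filter, Finset.card_filter,
    Fintype.sum_sum_type, Fintype.sum_sum_type]
  simp only [subdivisionVertexJoin, ↓reduceIte, Finset.sum_const_zero, add_zero, zero_add]
  -- The `if`s carry the join's `Decidable` instances, which agree with the standard ones only
  -- up to unfolding, so the goal is closed by `exact` (and below by `rfl`, `ac_rfl`), not `rw`.
  have := G₁.sum_edgeFinset_ite_mem u 1
  rw [Finset.sum_subtype G₁.edgeFinset (fun _ => mem_edgeFinset), smul_eq_mul, mul_one] at this
  exact this

theorem degree_subdivisionVertexJoin_inr_inl (e : G₁.edgeSet) :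
    (subdivisionVertexJoin G₁ G₂).degree (Sum.inr (Sum.inl e)) = Fintype.card V₂ + 2 := by
  obtain ⟨⟨x, y⟩, he⟩ := e
  rw [← card_neighborFinset_eq_degree, neighborFinset_eq_filter, Finset.card_filter,
    Fintype.sum_sum_type, Fintype.sum_sum_type]
  simp only [subdivisionVertexJoin, ↓reduceIte, Finset.sum_const_zero, Finset.sum_const,
    Finset.card_univ, smul_eq_mul, mul_one, zero_add]
  rw [add_comm]
  exact congrArg (Fintype.card V₂ + ·) (Sym2.sum_ite_mem_mk (G₁.ne_of_adj he) (fun _ => 1))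

theorem degree_subdivisionVertexJoin_inr_inr (a : V₂) :
    (subdivisionVertexJoin G₁ G₂).degree (Sum.inr (Sum.inr a)) = #G₁.edgeFinset + G₂.degree a := by
  rw [← card_neighborFinset_eq_degree, neighborFinset_eq_filter, Finset.card_filter,
    Fintype.sum_sum_type, Fintype.sum_sum_type]
  simp only [subdivisionVertexJoin, ↓reduceIte, Finset.sum_const_zero, Finset.sum_const,
    Finset.card_univ, smul_eq_mul, mul_one, zero_add]
  rw [edgeFinset_card, ← card_neighborFinset_eq_degree, neighborFinset_eq_filter,
    Finset.card_filter]
  rfl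

theorem sum_edgeFinset_subdivisionVertexJoin [DecidableEq V₂] {M : Type*} [AddCommMonoid M]
    [IsAddTorsionFree M] (f : V₁ ⊕ G₁.edgeSet ⊕ V₂ → V₁ ⊕ G₁.edgeSet ⊕ V₂ → M)
    (hf : ∀ x y, f x y = f y x) :
    ∑ z ∈ (subdivisionVertexJoin G₁ G₂).edgeFinset, Sym2.lift ⟨f, hf⟩ z
      = ∑ z ∈ (subdivisionGraph G₁).edgeFinset,
          Sym2.lift ⟨fun x y => f (Sum.map id Sum.inl x) (Sum.map id Sum.inl y),
            fun _ _ => hf _ _⟩ z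
        + ∑ e : G₁.edgeSet, ∑ a, f (Sum.inr (Sum.inl e)) (Sum.inr (Sum.inr a))
        + ∑ z ∈ G₂.edgeFinset,
          Sym2.lift ⟨fun a b => f (Sum.inr (Sum.inr a)) (Sum.inr (Sum.inr b)),
            fun _ _ => hf _ _⟩ z := by
  apply IsAddTorsionFree.nsmul_right_injective two_ne_zero
  simp only [smul_add, two_nsmul_sum_edgeFinset_lift, Fintype.sum_sum_type]
  simp only [subdivisionVertexJoin, subdivisionGraph, ↓reduceIte, Finset.sum_const_zero, add_zero,
    zero_add, Finset.sum_add_distrib, Sum.map_inl, Sum.map_inr, id_eq, two_nsmul]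
  rw [Finset.sum_comm (f := fun a e => f (Sum.inr (Sum.inr a)) (Sum.inr (Sum.inl e)))]
  simp only [hf (Sum.inr (Sum.inr _)) (Sum.inr (Sum.inl _))]
  ac_rfl

theorem degree_subdivisionVertexJoin_map_inl (x : V₁ ⊕ G₁.edgeSet) :
    (subdivisionVertexJoin G₁ G₂).degree (Sum.map id Sum.inl x)
      = Sum.elim (fun u => G₁.degree u) (fun _ => Fintype.card V₂ + 2) x := by
  rcases x with u | e
  exacts [degree_subdivisionVertexJoin_inl G₁ G₂ u, degree_subdivisionVertexJoin_inr_inl G₁ G₂ e]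

theorem sum_edgeFinset_subdivisionGraph_degree_sub_one_mul :
    ∑ z ∈ (subdivisionGraph G₁).edgeFinset,
      Sym2.lift ⟨fun x y =>
        (((subdivisionVertexJoin G₁ G₂).degree (Sum.map id Sum.inl x) : ℤ) - 1) *
          (((subdivisionVertexJoin G₁ G₂).degree (Sum.map id Sum.inl y) : ℤ) - 1),
        fun _ _ => mul_comm _ _⟩ z
      = ((Fintype.card V₂ : ℤ) + 1) * ∑ z ∈ (subdivisionGraph G₁).edgeFinset,
          Sym2.lift ⟨fun x y =>
            Sum.elim (fun u : V₁ => (G₁.degree u : ℤ)) (fun _ : G₁.edgeSet => 0) x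
              + Sum.elim (fun u : V₁ => (G₁.degree u : ℤ)) (fun _ : G₁.edgeSet => 0) y,
            fun _ _ => add_comm _ _⟩ z
        - #(subdivisionGraph G₁).edgeFinset * ((Fintype.card V₂ : ℤ) + 1) := by
  rw [Finset.card_eq_sum_ones, Nat.cast_sum, Finset.sum_mul, Finset.mul_sum,
    ← Finset.sum_sub_distrib]
  refine Finset.sum_congr rfl fun z hz => ?_
  obtain ⟨u, e, -, rfl⟩ := exists_eq_of_mem_edgeSet_subdivisionGraph (mem_edgeFinset.1 hz)
  simp only [Sym2.lift_mk, degree_subdivisionVertexJoin_map_inl, Sum.elim_inl, Sum.elim_inr]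
  push_cast
  ring

theorem sum_sum_subdivisionVertexJoin_degree_sub_one_mul :
    ∑ e : G₁.edgeSet, ∑ a : V₂,
      (((subdivisionVertexJoin G₁ G₂).degree (Sum.inr (Sum.inl e)) : ℤ) - 1) *
        (((subdivisionVertexJoin G₁ G₂).degree (Sum.inr (Sum.inr a)) : ℤ) - 1)
      = #G₁.edgeFinset * ((Fintype.card V₂ : ℤ) + 1) *
          (2 * #G₂.edgeFinset + #G₁.edgeFinset * Fintype.card V₂ - Fintype.card V₂) := by
  have hdeg : ∑ a, (G₂.degree a : ℤ) = 2 * #G₂.edgeFinset := by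
    exact_mod_cast G₂.sum_degrees_eq_twice_card_edges
  simp only [degree_subdivisionVertexJoin_inr_inl, degree_subdivisionVertexJoin_inr_inr,
    Finset.sum_const, Finset.card_univ, ← edgeFinset_card, nsmul_eq_mul, ← Finset.mul_sum]
  push_cast
  simp only [Finset.sum_sub_distrib, Finset.sum_add_distrib, hdeg, Finset.sum_const,
    Finset.card_univ, nsmul_eq_mul]
  ring

end SubdivisionVertexJoin

/-- The reduced second Zagreb index of `G₁ ∔ G₂`.  In the final sum, which ranges over the
edges of `S(G₁)`, each edge joins an original vertex `u ∈ V(G₁)` to a subdivision vertex,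
and the summand is the degree in `G₁` of that original endpoint `u`
(subdivision-vertex endpoints contribute `0` via `Sum.elim`). -/
theorem reducedSecondZagreb_subdivisionVertexJoin {V₁ V₂ : Type*} [Fintype V₁] [Fintype V₂]
    [DecidableEq V₁] [DecidableEq V₂] (G₁ : SimpleGraph V₁) (G₂ : SimpleGraph V₂)
    [DecidableRel G₁.Adj] [DecidableRel G₂.Adj]
    (n₂ m₁ m₂ m₁' : ℕ)
    (hn₂ : Fintype.card V₂ = n₂)
    (hm₁ : G₁.edgeFinset.card = m₁) (hm₂ : G₂.edgeFinset.card = m₂)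
    (hm₁' : (subdivisionGraph G₁).edgeFinset.card = m₁') :
    reducedSecondZagreb (subdivisionVertexJoin G₁ G₂)
      = reducedSecondZagreb G₂ + m₁ * (firstZagreb G₂ + (m₁ : ℤ) * m₂ - 2 * m₂)
        - m₁' * ((n₂ : ℤ) + 1)
        + m₁ * ((n₂ : ℤ) + 1) * (2 * (m₂ : ℤ) + (m₁ : ℤ) * n₂ - n₂)
        + ((n₂ : ℤ) + 1) *
            ∑ e ∈ (subdivisionGraph G₁).edgeFinset,
              Sym2.lift
                ⟨fun x y =>
                  Sum.elim (fun u : V₁ => (G₁.degree u : ℤ)) (fun _ : G₁.edgeSet => 0) x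
                  + Sum.elim (fun u : V₁ => (G₁.degree u : ℤ)) (fun _ : G₁.edgeSet => 0) y,
                  fun _ _ => by ring⟩ e := by
  subst hn₂ hm₁ hm₂ hm₁'
  rw [reducedSecondZagreb, sum_edgeFinset_subdivisionVertexJoin,
    sum_edgeFinset_subdivisionGraph_degree_sub_one_mul,
    sum_sum_subdivisionVertexJoin_degree_sub_one_mul]
  simp only [degree_subdivisionVertexJoin_inr_inr]
  rw [SimpleGraph.sum_edgeFinset_add_degree_sub_one_mul]
  ring
end
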